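/- Let g ≥ 0, T > 0, let f₁, f₂ : ℝ → ℝ be C² and T-periodic with f₁(t) < f₂(t) for all t, and fix l > sup_{t₁,t₂} |f₂(t₂) − f₁(t₁)|. Then there exist r > 0 and c₀ ∈ (0, 1) such that for every 6-tuple (t, v, t̃, ṽ, t', v') satisfying the one-step Fermi–Ulam relations with v' > 0 and 0 < 2l/v ≤ r, one has |t' − t − 2l/v| < c₀·(2l/v). -/

import Mathlib

open Filter Topology

/-! With `y = 2l/v`, a fast ball meets the upper plate before time `t + y`, since by then the
free parabola has risen by almost `2l`; afterwards its speed stays above `3v/4` on both legs, and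
as each leg covers less than `l` of height, the whole cycle lasts less than `4y/3`. Conversely,
the ascent must bridge at least the minimal gap `m = min (f₂ - f₁)`, while the lower plate moves
by at most `M₁ (t̃ - t)` with `M₁ = sup |f₁'| < v`; so `t̃ - t > m/(2v) = (m/4l) y`, and
`c₀ = 1 - m/(4l)` works. -/

/-- One bounce cycle of the Fermi–Ulam model in an external field with downward
acceleration `g`: the ball leaves the lower plate `f₁` at time `t` with
velocity `v > 0`, hits the upper plate `f₂` at the first possible time `t̃ > t`
leaving it with velocity `ṽ < 0`, and returns to the lower plate at the first
possible time `t' > t̃`, leaving it with velocity `v'`. -/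
def FUStep (g : ℝ) (f₁ f₂ : ℝ → ℝ) (t v tt vv t' v' : ℝ) : Prop :=
  0 < v ∧ vv < 0 ∧ t < tt ∧ tt < t' ∧
  f₂ tt - f₁ t = v * (tt - t) - g / 2 * (tt - t) ^ 2 ∧
  (∀ s : ℝ, t < s →
    f₂ s - f₁ t = v * (s - t) - g / 2 * (s - t) ^ 2 → tt ≤ s) ∧
  vv = -v + g * (tt - t) + 2 * deriv f₂ tt ∧
  f₂ tt - f₁ t' = -vv * (t' - tt) + g / 2 * (t' - tt) ^ 2 ∧
  (∀ s : ℝ, tt < s →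
    f₂ tt - f₁ s = -vv * (s - tt) + g / 2 * (s - tt) ^ 2 → t' ≤ s) ∧
  v' = v + g * (t' - 2 * tt + t) + 2 * deriv f₁ t' - 2 * deriv f₂ tt

namespace Function.Periodic

variable {f : ℝ → ℝ} {c : ℝ}

theorem deriv (hp : Periodic f c) : Periodic (_root_.deriv f) c := fun x => by
  rw [← deriv_comp_add_const, show (fun y => f (y + c)) = f from funext hp]

theorem exists_forall_le (hp : Periodic f c) (hc : c ≠ 0) (hf : Continuous f) :
    ∃ x₀, ∀ x, f x₀ ≤ f x := by
  obtain ⟨_, ⟨x₀, rfl⟩, hmin⟩ :=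
    (hp.compact_of_continuous hc hf).exists_isLeast (Set.range_nonempty f)
  exact ⟨x₀, fun x => hmin ⟨x, rfl⟩⟩

theorem exists_abs_le (hp : Periodic f c) (hc : c ≠ 0) (hf : Continuous f) :
    ∃ M, ∀ x, |f x| ≤ M := by
  obtain ⟨M, hM⟩ := isBounded_iff_forall_norm_le.1 (hp.isBounded_of_continuous hc hf)
  exact ⟨M, fun x => hM _ ⟨x, rfl⟩⟩

end Function.Periodic

namespace FUStep

variable {g : ℝ} {f₁ f₂ : ℝ → ℝ} {t v tt vv t' v' : ℝ}

theorem ascent_lt_of_lt (h : FUStep g f₁ f₂ t v tt vv t' v') (hf₂ : Continuous f₂)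
    (ht : f₁ t < f₂ t) {s : ℝ} (hs : 0 ≤ s)
    (hs_above : f₂ (t + s) - f₁ t < v * s - g / 2 * s ^ 2) : tt - t < s := by
  obtain ⟨-, -, -, -, -, hfirst, -⟩ := h
  set φ : ℝ → ℝ := fun x => v * (x - t) - g / 2 * (x - t) ^ 2 - (f₂ x - f₁ t)
  have hφ : Continuous φ := by fun_prop
  have hzero : (0 : ℝ) ∈ Set.Ioo (φ t) (φ (t + s)) :=
    ⟨by simp [φ, ht], by simp only [φ, add_sub_cancel_left]; linarith⟩
  obtain ⟨x, ⟨htx, hxs⟩, hx⟩ :=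
    intermediate_value_Ioo (by linarith) hφ.continuousOn hzero
  have := hfirst x htx (by simp only [φ] at hx; linarith)
  linarith

theorem mul_cycle_le (h : FUStep g f₁ f₂ t v tt vv t' v') (hg : 0 ≤ g) {M : ℝ}
    (hM : |deriv f₂ tt| ≤ M) :
    (v - g * (tt - t) - 2 * M) * (t' - t) ≤ (f₂ tt - f₁ t) + (f₂ tt - f₁ t') := by
  obtain ⟨-, -, htt, ht', hup, -, hvv, hdown, -⟩ := h
  have hM' : deriv f₂ tt ≤ M := (le_abs_self _).trans hM
  have hM0 : 0 ≤ M := (abs_nonneg _).trans hM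
  rw [hup, hdown, hvv]
  have h₁ : 0 ≤ g * (tt - t) ^ 2 := by positivity
  have h₂ : 0 ≤ g * (t' - tt) ^ 2 := by positivity
  have h₃ : 0 ≤ M * (tt - t) := mul_nonneg hM0 (by linarith)
  have h₄ : deriv f₂ tt * (t' - tt) ≤ M * (t' - tt) :=
    mul_le_mul_of_nonneg_right hM' (by linarith)
  nlinarith

theorem gap_le_mul_ascent (h : FUStep g f₁ f₂ t v tt vv t' v') (hg : 0 ≤ g)
    (hf₁ : Differentiable ℝ f₁) {M : ℝ} (hM : ∀ x, |deriv f₁ x| ≤ M) :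
    f₂ tt - f₁ tt ≤ (v + M) * (tt - t) := by
  obtain ⟨-, -, htt, -, hup, -⟩ := h
  have hlip : |f₁ tt - f₁ t| ≤ M * |tt - t| := by
    simpa only [Real.norm_eq_abs] using Convex.norm_image_sub_le_of_norm_deriv_le
      (fun x _ => hf₁ x) (fun x _ => by simpa only [Real.norm_eq_abs] using hM x)
      convex_univ (Set.mem_univ t) (Set.mem_univ tt)
  rw [abs_of_pos (sub_pos.2 htt)] at hlip
  have hgrav : 0 ≤ g / 2 * (tt - t) ^ 2 := by positivity
  linarith [neg_abs_le (f₁ tt - f₁ t)]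

theorem cycle_lt (h : FUStep g f₁ f₂ t v tt vv t' v') (hg : 0 ≤ g) (hf₂ : Continuous f₂)
    (ht : f₁ t < f₂ t) {l : ℝ} (hl : ∀ a b, f₂ b - f₁ a < l) {M : ℝ}
    (hM : ∀ x, |deriv f₂ x| ≤ M) (hvl : 2 * l ≤ v) (hvM : 4 * (g + 2 * M) ≤ v) :
    t' - t < 4 / 3 * (2 * l / v) := by
  have hmul := h.mul_cycle_le hg (hM tt)
  have hv := h.1
  set y := 2 * l / v
  have hvy : v * y = 2 * l := mul_div_cancel₀ _ hv.ne'
  have hy0 : 0 < y := div_pos (by linarith [hl t t]) hv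
  have hy1 : y ≤ 1 := (div_le_one hv).2 hvl
  have hgy : g * y ≤ l / 2 := by
    nlinarith [mul_le_mul_of_nonneg_right hvM hy0.le, (abs_nonneg _).trans (hM t)]
  -- at time `t + y` the free parabola has risen by `2l - g y² / 2 ≥ 7l/4`, above the upper plate
  have hascent : tt - t < y := h.ascent_lt_of_lt hf₂ ht hy0.le (by nlinarith [hl t (t + y)])
  obtain ⟨-, -, htt, ht', -⟩ := h
  have hspeed : 3 / 4 * v ≤ v - g * (tt - t) - 2 * M := by nlinarith
  have hcycle : 3 / 4 * v * (t' - t) < v * y :=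
    calc 3 / 4 * v * (t' - t) ≤ (v - g * (tt - t) - 2 * M) * (t' - t) :=
          mul_le_mul_of_nonneg_right hspeed (by linarith)
      _ < l + l := hmul.trans_lt (add_lt_add (hl t tt) (hl t' tt))
      _ = v * y := by rw [hvy]; ring
  nlinarith

theorem lt_cycle (h : FUStep g f₁ f₂ t v tt vv t' v') (hg : 0 ≤ g)
    (hf₁ : Differentiable ℝ f₁) {M : ℝ} (hM : ∀ x, |deriv f₁ x| ≤ M) (hvM : M < v)
    {m : ℝ} (hm : ∀ x, m ≤ f₂ x - f₁ x) : m / (2 * v) < t' - t := by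
  have hgap := (hm tt).trans (h.gap_le_mul_ascent hg hf₁ hM)
  obtain ⟨hv, -, htt, ht', -⟩ := h
  rw [div_lt_iff₀ (by linarith)]
  calc m ≤ (v + M) * (tt - t) := hgap
    _ < (2 * v) * (tt - t) := mul_lt_mul_of_pos_right (by linarith) (by linarith)
    _ < (t' - t) * (2 * v) := by nlinarith

theorem abs_cycle_sub_lt (h : FUStep g f₁ f₂ t v tt vv t' v') (hg : 0 ≤ g)
    (hf₁ : Differentiable ℝ f₁) (hf₂ : Continuous f₂) {m l M₁ M₂ : ℝ}
    (hm : ∀ x, m ≤ f₂ x - f₁ x) (hm0 : 0 < m) (hl : ∀ a b, f₂ b - f₁ a < l)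
    (hM₁ : ∀ x, |deriv f₁ x| ≤ M₁) (hM₂ : ∀ x, |deriv f₂ x| ≤ M₂)
    (hvl : 2 * l ≤ v) (hvM : 4 * (g + 2 * M₂ + M₁) ≤ v) :
    |t' - t - 2 * l / v| < (1 - m / (4 * l)) * (2 * l / v) := by
  have hv := h.1
  have hl0 : 0 < l := hm0.trans_le ((hm t).trans (hl t t).le)
  have hM₁0 : 0 ≤ M₁ := (abs_nonneg _).trans (hM₁ t)
  have hM₂0 : 0 ≤ M₂ := (abs_nonneg _).trans (hM₂ t)
  have hupper := h.cycle_lt hg hf₂ (by linarith [hm t]) hl hM₂ hvl (by linarith)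
  have hlower := h.lt_cycle hg hf₁ hM₁ (by linarith) hm
  have hq : m / (4 * l) < 1 / 4 := by
    rw [div_lt_iff₀ (by positivity)]; linarith [(hm t).trans_lt (hl t t)]
  have hy : 0 < 2 * l / v := by positivity
  have hmy : m / (4 * l) * (2 * l / v) = m / (2 * v) := by field_simp; ring
  rw [abs_lt]
  constructor <;> nlinarith

end FUStep

/-- The first inequality of estimate (4.23): in the coordinate `y = 2l/v`, with
`l` larger than the total oscillation as in (4.22), the angular displacement
`t' − t` of the Fermi–Ulam return map equals `y` up to an error strictly
smaller than `c₀·y` with `c₀ < 1`. -/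
theorem fermi_ulam_angular_estimate
    (g T : ℝ) (hg : 0 ≤ g) (hT : 0 < T) (f₁ f₂ : ℝ → ℝ)
    (hf₁ : ContDiff ℝ 2 f₁) (hf₂ : ContDiff ℝ 2 f₂)
    (hper₁ : Function.Periodic f₁ T) (hper₂ : Function.Periodic f₂ T)
    (hlt : ∀ s : ℝ, f₁ s < f₂ s)
    (l : ℝ) (hl : ∀ t₁ t₂ : ℝ, |f₂ t₂ - f₁ t₁| < l) :
    ∃ r > (0 : ℝ), ∃ c₀ : ℝ, 0 < c₀ ∧ c₀ < 1 ∧ ∀ t v tt vv t' v' : ℝ,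
      FUStep g f₁ f₂ t v tt vv t' v' → 0 < v' →
      0 < 2 * l / v → 2 * l / v ≤ r →
      |t' - t - 2 * l / v| < c₀ * (2 * l / v) := by
  obtain ⟨M₁, hM₁⟩ :=
    hper₁.deriv.exists_abs_le hT.ne' (hf₁.continuous_deriv one_le_two)
  obtain ⟨M₂, hM₂⟩ :=
    hper₂.deriv.exists_abs_le hT.ne' (hf₂.continuous_deriv one_le_two)
  obtain ⟨x₀, hx₀⟩ :=
    (hper₂.sub hper₁).exists_forall_le hT.ne' (hf₂.continuous.sub hf₁.continuous)
  set m := f₂ x₀ - f₁ x₀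
  have hm0 : 0 < m := sub_pos.2 (hlt x₀)
  have hml : m < l := (le_abs_self _).trans_lt (hl x₀ x₀)
  have hl0 : 0 < l := hm0.trans hml
  have hl' : ∀ a b, f₂ b - f₁ a < l := fun a b => (le_abs_self _).trans_lt (hl a b)
  set V := max (2 * l) (4 * (g + 2 * M₂ + M₁))
  have hV : 0 < V := lt_max_of_lt_left (by linarith)
  refine ⟨2 * l / V, by positivity, 1 - m / (4 * l), ?_, ?_, fun t v tt vv t' v' h _ _ hy => ?_⟩
  · linarith [(div_lt_one (by positivity : (0 : ℝ) < 4 * l)).2 (by linarith : m < 4 * l)]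
  · exact sub_lt_self _ (by positivity)
  · have hVv : V ≤ v := (div_le_div_iff_of_pos_left (by positivity) h.1 hV).1 hy
    exact h.abs_cycle_sub_lt hg (hf₁.differentiable two_ne_zero) hf₂.continuous hx₀ hm0 hl'
      hM₁ hM₂ (le_of_max_le_left hVv) (le_of_max_le_right hVv)
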